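/- Let p be a prime such that p* < p, where p* is the least positive integer n with p ∣ F_n. Then p divides C(0,0)_F · C(p*,1)_F (which equals F_{p*}), but p does not divide the fibonomial coefficient C((p*)², p*)_F. -/

import Mathlib

/-!
Let `m = p*` and `e = v_p(F m)`. Working modulo `F m ^ 2`, one gets
`F (k m) ≡ k F m F (m + 1) ^ (k - 1)`, and `F (m + 1)` is coprime to `F m`, so
`v_p(F (k m)) = e` whenever `p ∤ k`; moreover `p ∤ F j` when `m ∤ j`. Hence
`v_p(n!_F) = e ⌊n / m⌋` for `n < p m`. Since `m < p` gives `m ^ 2 < p m`, the valuation of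
`C(m², m)_F` is `e (m - 1 - (m - 1)) = 0`.
-/

/-- The fibotorial `n!_F = F_n · F_{n-1} ⋯ F_1`, with `0!_F = 1`. -/
def fibotorial (n : ℕ) : ℕ := ∏ i ∈ Finset.range n, Nat.fib (i + 1)

/-- The fibonomial coefficient `C(n,k)_F = n!_F / (k!_F · (n-k)!_F)` for `k ≤ n`,
and `0` otherwise. -/
def fibnomial (n k : ℕ) : ℕ :=
  if k ≤ n then fibotorial n / (fibotorial k * fibotorial (n - k)) else 0

/-- `p*`, the least positive integer `t` such that `p ∣ F_t` (the Fibonacci entry point). -/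
noncomputable def fibEntry (p : ℕ) : ℕ := sInf {t : ℕ | 0 < t ∧ p ∣ Nat.fib t}

open Finset
open Nat (fib fib_pos)

def fibStep (N : ℕ) : Equiv.Perm (ZMod N × ZMod N) where
  toFun x := (x.2, x.1 + x.2)
  invFun x := (x.2 - x.1, x.1)
  left_inv x := by simp
  right_inv x := by simp

lemma fibStep_pow_apply_zero_one (N n : ℕ) :
    (fibStep N ^ n) (0, 1) = ((fib n : ZMod N), (fib (n + 1) : ZMod N)) := by
  induction n with
  | zero => simp
  | succ n ih =>
    rw [pow_succ', Equiv.Perm.mul_apply, ih]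
    simp [fibStep, Nat.fib_add_two]

lemma exists_pos_dvd_fib {N : ℕ} (hN : 0 < N) : ∃ t, 0 < t ∧ N ∣ fib t := by
  have : NeZero N := ⟨hN.ne'⟩
  refine ⟨orderOf (fibStep N), orderOf_pos _, ?_⟩
  have h := congrArg Prod.fst (fibStep_pow_apply_zero_one N (orderOf (fibStep N)))
  rw [pow_orderOf_eq_one] at h
  exact (ZMod.natCast_eq_zero_iff _ _).1 h.symm

section fibEntry

variable {N : ℕ}

lemma fibEntry_pos (hN : 0 < N) : 0 < fibEntry N :=
  (Nat.sInf_mem (exists_pos_dvd_fib hN)).1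

lemma dvd_fib_fibEntry (hN : 0 < N) : N ∣ fib (fibEntry N) :=
  (Nat.sInf_mem (exists_pos_dvd_fib hN)).2

lemma dvd_fib_iff_fibEntry_dvd (hN : 0 < N) {n : ℕ} : N ∣ fib n ↔ fibEntry N ∣ n := by
  refine ⟨fun h => ?_, fun h => (dvd_fib_fibEntry hN).trans (Nat.fib_dvd _ _ h)⟩
  have hgcd_pos : 0 < (fibEntry N).gcd n := Nat.gcd_pos_of_pos_left _ (fibEntry_pos hN)
  have hdvd_gcd : N ∣ fib ((fibEntry N).gcd n) := by
    rw [Nat.fib_gcd]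
    exact Nat.dvd_gcd (dvd_fib_fibEntry hN) h
  have hgcd : (fibEntry N).gcd n = fibEntry N :=
    le_antisymm (Nat.gcd_le_left _ (fibEntry_pos hN)) (Nat.sInf_le ⟨hgcd_pos, hdvd_gcd⟩)
  exact Nat.gcd_eq_left_iff_dvd.1 hgcd

end fibEntry

lemma fibotorial_succ (n : ℕ) : fibotorial (n + 1) = fibotorial n * fib (n + 1) :=
  prod_range_succ _ _

lemma fibotorial_pos (n : ℕ) : 0 < fibotorial n :=
  prod_pos fun i _ => fib_pos.2 i.succ_pos

-- Integrality of fibonomials, from `F (a + b + 2) = F (a + 1) F b + F (a + 2) F (b + 1)`.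
lemma fibotorial_mul_fibotorial_dvd : ∀ a b, fibotorial a * fibotorial b ∣ fibotorial (a + b)
  | 0, b => by simp [fibotorial]
  | a + 1, 0 => by simp [fibotorial]
  | a + 1, b + 1 => by
    have h₁ := fibotorial_mul_fibotorial_dvd a (b + 1)
    have h₂ := fibotorial_mul_fibotorial_dvd (a + 1) b
    rw [show a + (b + 1) = a + 1 + b by ring] at h₁
    rw [show a + 1 + (b + 1) = a + 1 + b + 1 by ring, fibotorial_succ (a + 1 + b), Nat.fib_add, mul_add]
    refine dvd_add ?_ ?_
    · calc fibotorial (a + 1) * fibotorial (b + 1)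
          = fibotorial a * fibotorial (b + 1) * fib (a + 1) := by rw [fibotorial_succ]; ring
        _ ∣ fibotorial (a + 1 + b) * (fib (a + 1) * fib b) :=
          (mul_dvd_mul_right h₁ _).trans (by rw [← mul_assoc]; exact dvd_mul_right _ _)
    · calc fibotorial (a + 1) * fibotorial (b + 1)
          = fibotorial (a + 1) * fibotorial b * fib (b + 1) := by rw [fibotorial_succ b]; ring
        _ ∣ fibotorial (a + 1 + b) * (fib (a + 1 + 1) * fib (b + 1)) :=
          (mul_dvd_mul_right h₂ _).trans (by rw [mul_left_comm]; exact dvd_mul_left _ _)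

lemma fibnomial_mul_fibotorial_mul_fibotorial {n k : ℕ} (hk : k ≤ n) :
    fibnomial n k * (fibotorial k * fibotorial (n - k)) = fibotorial n := by
  rw [fibnomial, if_pos hk]
  refine Nat.div_mul_cancel ?_
  simpa [Nat.add_sub_cancel' hk] using fibotorial_mul_fibotorial_dvd k (n - k)

lemma fibnomial_pos {n k : ℕ} (hk : k ≤ n) : 0 < fibnomial n k :=
  Nat.pos_of_mul_pos_right ((fibnomial_mul_fibotorial_mul_fibotorial hk).symm ▸ fibotorial_pos n)

lemma fibnomial_zero_right (n : ℕ) : fibnomial n 0 = 1 := by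
  simp [fibnomial, fibotorial]

lemma fibnomial_one_right : ∀ n, fibnomial n 1 = fib n
  | 0 => rfl
  | n + 1 => by
    rw [fibnomial, if_pos (Nat.le_add_left 1 n), fibotorial_succ, Nat.add_sub_cancel,
      show fibotorial 1 = 1 by simp [fibotorial], one_mul,
      Nat.mul_div_cancel_left _ (fibotorial_pos n)]

lemma cast_fib_succ_mul_of_cast_fib_sq_eq_zero {R : Type*} [CommRing R] {m : ℕ}
    (hm : (fib m : R) ^ 2 = 0) (k : ℕ) :
    (fib ((k + 1) * m) : R) = (k + 1) * fib m * fib (m + 1) ^ k ∧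
      (fib ((k + 1) * m + 1) : R) = fib (m + 1) ^ (k + 1) := by
  cases m with
  | zero => simp
  | succ n =>
    have hF : (fib (n + 2) : R) = fib n + fib (n + 1) := by
      rw [Nat.fib_add_two]; push_cast; ring
    induction k with
    | zero => simp
    | succ k ih =>
      have h₁ : fib ((k + 1 + 1) * (n + 1)) =
          fib ((k + 1) * (n + 1)) * fib n + fib ((k + 1) * (n + 1) + 1) * fib (n + 1) := by
        rw [← Nat.fib_add]; ring_nf
      have h₂ : fib ((k + 1 + 1) * (n + 1) + 1) =
          fib ((k + 1) * (n + 1)) * fib (n + 1) + fib ((k + 1) * (n + 1) + 1) * fib (n + 2) := by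
        rw [← Nat.fib_add]; ring_nf
      rw [h₁, h₂]
      push_cast
      rw [ih.1, ih.2]
      constructor
      · linear_combination (-((k : R) + 1) * (fib (n + 2) : R) ^ k) * hm
          + (-((k : R) + 1) * fib (n + 1) * (fib (n + 2) : R) ^ k) * hF
      · linear_combination ((k : R) + 1) * (fib (n + 2) : R) ^ k * hm

lemma factorization_fib_mul_of_not_dvd {p m k : ℕ} (hp : p.Prime) (hpm : p ∣ fib m)
    (hk : ¬ p ∣ k) : (fib (k * m)).factorization p = (fib m).factorization p := by
  rcases Nat.eq_zero_or_pos m with rfl | hm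
  · simp
  obtain ⟨k, rfl⟩ : ∃ k', k = k' + 1 :=
    Nat.exists_eq_succ_of_ne_zero (by rintro rfl; exact hk (dvd_zero p))
  set e := (fib m).factorization p
  have hFm : fib m ≠ 0 := (fib_pos.2 hm).ne'
  have hFkm : fib ((k + 1) * m) ≠ 0 := (fib_pos.2 (by positivity)).ne'
  refine le_antisymm ?_
    ((Nat.factorization_le_iff_dvd hFm hFkm).2 (Nat.fib_dvd _ _ (dvd_mul_left m _)) p)
  by_contra! hlt
  have he : 1 ≤ e := (hp.dvd_iff_one_le_factorization hFm).1 hpm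
  have hsq : p ^ (e + 1) ∣ fib m ^ 2 :=
    calc p ^ (e + 1) ∣ (p ^ e) ^ 2 := by rw [← pow_mul]; exact pow_dvd_pow p (by omega)
      _ ∣ fib m ^ 2 := pow_dvd_pow_of_dvd (Nat.ordProj_dvd _ _) 2
  have hcong : fib ((k + 1) * m) ≡ (k + 1) * fib m * fib (m + 1) ^ k [MOD fib m ^ 2] := by
    rw [← ZMod.natCast_eq_natCast_iff]
    push_cast
    exact (cast_fib_succ_mul_of_cast_fib_sq_eq_zero (by exact_mod_cast ZMod.natCast_self _) k).1
  have hdvd : p ^ (e + 1) ∣ (k + 1) * fib m * fib (m + 1) ^ k :=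
    (hcong.dvd_iff hsq).1 ((hp.pow_dvd_iff_le_factorization hFkm).2 hlt)
  have hcop_k : (p ^ (e + 1)).Coprime (k + 1) :=
    Nat.Coprime.pow_left _ (hp.coprime_iff_not_dvd.2 hk)
  have hcop_fib : (p ^ (e + 1)).Coprime (fib (m + 1) ^ k) :=
    Nat.Coprime.pow _ _ ((Nat.fib_coprime_fib_succ m).coprime_dvd_left hpm)
  exact Nat.pow_succ_factorization_not_dvd hFm hp
    (hcop_k.dvd_of_dvd_mul_left (hcop_fib.dvd_of_dvd_mul_right hdvd))

theorem factorization_fibotorial {p n : ℕ} (hp : p.Prime) (hn : n < p * fibEntry p) :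
    (fibotorial n).factorization p = (fib (fibEntry p)).factorization p * (n / fibEntry p) := by
  have hterm : ∀ i ∈ range n, (fib (i + 1)).factorization p =
      if fibEntry p ∣ i + 1 then (fib (fibEntry p)).factorization p else 0 := by
    intro i hi
    split_ifs with hdvd
    · obtain ⟨k, hk⟩ := hdvd
      have hk_pos : 0 < k := Nat.pos_of_ne_zero (by rintro rfl; simp at hk)
      have hk_lt : k < p := by
        refine Nat.lt_of_mul_lt_mul_left (a := fibEntry p) ?_
        rw [← hk, mul_comm]
        exact lt_of_le_of_lt (mem_range.1 hi) hn
      rw [hk, mul_comm]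
      exact factorization_fib_mul_of_not_dvd hp (dvd_fib_fibEntry hp.pos)
        (Nat.not_dvd_of_pos_of_lt hk_pos hk_lt)
    · exact Nat.factorization_eq_zero_of_not_dvd (mt (dvd_fib_iff_fibEntry_dvd hp.pos).1 hdvd)
  rw [fibotorial, Nat.factorization_prod fun i _ => (fib_pos.2 i.succ_pos).ne',
    Finset.sum_apply', sum_congr rfl hterm, ← sum_filter, sum_const, Nat.card_multiples,
    smul_eq_mul, mul_comm]

theorem factorization_fibnomial {p n k : ℕ} (hp : p.Prime) (hk : k ≤ n) (hn : n < p * fibEntry p) :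
    (fibnomial n k).factorization p = (fib (fibEntry p)).factorization p *
      (n / fibEntry p - k / fibEntry p - (n - k) / fibEntry p) := by
  have h := congrArg (fun x => x.factorization p) (fibnomial_mul_fibotorial_mul_fibotorial hk)
  simp only [Nat.factorization_mul (fibnomial_pos hk).ne'
      (Nat.mul_ne_zero (fibotorial_pos k).ne' (fibotorial_pos (n - k)).ne'),
    Nat.factorization_mul (fibotorial_pos k).ne' (fibotorial_pos (n - k)).ne',
    Finsupp.add_apply] at h
  rw [factorization_fibotorial hp hn, factorization_fibotorial hp (hk.trans_lt hn),
    factorization_fibotorial hp ((Nat.sub_le n k).trans_lt hn)] at h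
  have hdiv : k / fibEntry p + (n - k) / fibEntry p ≤ n / fibEntry p := by
    simpa [Nat.add_sub_cancel' hk] using Nat.div_add_div_le_add_div (x := k) (y := n - k) (z := fibEntry p)
  rw [Nat.mul_sub, Nat.mul_sub]
  have := Nat.mul_le_mul_left ((fib (fibEntry p)).factorization p) hdiv
  rw [mul_add] at this
  omega

theorem fibnomial_counterexample_of_entry_lt (p : ℕ) (hp : p.Prime)
    (hlt : fibEntry p < p) :
    p ∣ fibnomial 0 0 * fibnomial (fibEntry p) 1 ∧
      ¬ p ∣ fibnomial (fibEntry p ^ 2) (fibEntry p) := by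
  have hm : 0 < fibEntry p := fibEntry_pos hp.pos
  refine ⟨?_, ?_⟩
  · rw [fibnomial_zero_right, fibnomial_one_right, one_mul]
    exact dvd_fib_fibEntry hp.pos
  · have hle : fibEntry p ≤ fibEntry p ^ 2 := Nat.le_self_pow two_ne_zero _
    have hsq_lt : fibEntry p ^ 2 < p * fibEntry p := by
      rw [sq]; exact Nat.mul_lt_mul_of_pos_right hlt hm
    have hquot : fibEntry p ^ 2 / fibEntry p - fibEntry p / fibEntry p
        - (fibEntry p ^ 2 - fibEntry p) / fibEntry p = 0 := by
      rw [sq, ← Nat.sub_one_mul, Nat.mul_div_cancel _ hm, Nat.mul_div_cancel _ hm,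
        Nat.div_self hm]
      omega
    rw [hp.dvd_iff_one_le_factorization (fibnomial_pos hle).ne',
      factorization_fibnomial hp hle hsq_lt, hquot, mul_zero]
    exact Nat.one_pos.not_ge
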